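/- arXiv:1802.09879 — 4 statements merged into one kernel-verified Lean document; each statement's English description precedes it below -/
import Mathlib

section
/- For any vector w ∈ ℝⁿ, the ℓ0 norm of w (the number of nonzero entries) equals the minimum of ⟨1, 1 - v⟩ over all v ∈ ℝⁿ with 0 ≤ v ≤ 1 satisfying v ⊙ |w| = 0 componentwise. -/
open Finset

/-- The ℓ0 "norm": number of nonzero entries of `w`. -/
noncomputable def l0 {n : ℕ} (w : Fin n → ℝ) : ℕ :=
  (Finset.univ.filter (fun i => w i ≠ 0)).card

/-- The ℓ0 norm of `w` is the least value of `⟨1, 1 - v⟩` over all `v` with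
`0 ≤ v ≤ 1` componentwise and `v ⊙ |w| = 0` componentwise. -/
theorem l0_variational (n : ℕ) (w : Fin n → ℝ) :
    IsLeast {t : ℝ | ∃ v : Fin n → ℝ,
      (∀ i, 0 ≤ v i ∧ v i ≤ 1) ∧ (∀ i, v i * |w i| = 0) ∧ t = ∑ i, (1 - v i)}
      ((l0 w : ℝ)) := by
  constructor
  · refine ⟨fun i => if w i = 0 then 1 else 0, fun i => ?_, fun i => ?_, ?_⟩
    · by_cases h : w i = 0 <;> simp [h]
    · by_cases h : w i = 0 <;> simp [h]
    · rw [l0, Finset.card_filter]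
      push_cast
      refine Finset.sum_congr rfl fun i _ => ?_
      by_cases h : w i = 0 <;> simp [h]
  · rintro t ⟨v, hbd, hz, rfl⟩
    rw [l0, Finset.card_filter]
    push_cast
    refine Finset.sum_le_sum fun i _ => ?_
    by_cases h : w i = 0
    · simp [h, (hbd i).2]
    · have : v i = 0 := by
        have := hz i
        have habs : |w i| ≠ 0 := abs_ne_zero.mpr h
        exact (mul_eq_zero.mp this).resolve_right habs
      simp [h, this]
end

section
/- Let F(u) = ‖o ⊙ (Ku - b)‖₀ + λ‖∇u‖_{p,1} for u ∈ [0,1]ⁿ and let G(u,v) = ⟨1, 1 - v⟩ + λ‖∇u‖_{p,1} subject to 0 ≤ u,v ≤ 1 and v ⊙ |o ⊙ (Ku - b)| = 0. If u* is a global minimizer of F over [0,1]ⁿ, then (u*, 1 - sign(|o ⊙ (Ku* - b)|)) is a global minimizer of G over its feasible set. -/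
open Finset

/-!
The complementarity constraint `v ⊙ |r| = 0` forces `vᵢ = 0` wherever the residual `r` is
nonzero, so `⟨1, 1 - v⟩ ≥ ‖r‖₀` on the feasible set, with equality at `v = 1 - sign |r|`.
Hence `G(u, v) ≥ F(u) ≥ F(u*) = G(u*, v*)`.
-/

lemma Real.sign_abs (x : ℝ) : Real.sign |x| = if x = 0 then 0 else 1 := by
  split_ifs with hx
  · simp [hx]
  · exact Real.sign_of_pos (abs_pos.mpr hx)

lemma Real.one_sub_sign_abs_mem_Icc (x : ℝ) : 1 - Real.sign |x| ∈ Set.Icc 0 1 := by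
  rw [Real.sign_abs]
  split_ifs <;> norm_num

lemma Real.one_sub_sign_abs_mul_abs (x : ℝ) : (1 - Real.sign |x|) * |x| = 0 := by
  rw [Real.sign_abs]
  split_ifs with hx <;> simp [hx]

lemma l0_eq_sum_sign_abs {n : ℕ} (w : Fin n → ℝ) : (l0 w : ℝ) = ∑ i, Real.sign |w i| := by
  simp only [l0, Finset.card_filter, Nat.cast_sum, Real.sign_abs]
  exact Finset.sum_congr rfl fun i _ => by split_ifs <;> simp_all

lemma l0_le_sum_one_sub_of_mul_abs_eq_zero {n : ℕ} {w v : Fin n → ℝ} (hv : ∀ i, v i ≤ 1)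
    (hvw : ∀ i, v i * |w i| = 0) : (l0 w : ℝ) ≤ ∑ i, (1 - v i) := by
  rw [l0_eq_sum_sign_abs]
  refine Finset.sum_le_sum fun i _ => ?_
  rw [Real.sign_abs]
  split_ifs with hw
  · linarith [hv i]
  · have hvi : v i = 0 := (mul_eq_zero.mp (hvw i)).resolve_right (abs_ne_zero.mpr hw)
    simp [hvi]

theorem l0tv_mpec_forward_general (n : ℕ) (K Dx Dy : Matrix (Fin n) (Fin n) ℝ)
    (b o : Fin n → ℝ)
    (lam p : ℝ)
    (ustar : Fin n → ℝ)
    (hmin : ∀ u : Fin n → ℝ, (∀ i, 0 ≤ u i ∧ u i ≤ 1) →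
      (l0 (fun i => o i * (K.mulVec ustar i - b i)) : ℝ) +
        lam * ∑ i, (|Dx.mulVec ustar i| ^ p + |Dy.mulVec ustar i| ^ p) ^ (1/p) ≤
      (l0 (fun i => o i * (K.mulVec u i - b i)) : ℝ) +
        lam * ∑ i, (|Dx.mulVec u i| ^ p + |Dy.mulVec u i| ^ p) ^ (1/p)) :
    let vstar : Fin n → ℝ := fun i => 1 - Real.sign |o i * (K.mulVec ustar i - b i)|
    (∀ i, 0 ≤ vstar i ∧ vstar i ≤ 1) ∧
    (∀ i, vstar i * |o i * (K.mulVec ustar i - b i)| = 0) ∧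
    (∀ u v : Fin n → ℝ, (∀ i, 0 ≤ u i ∧ u i ≤ 1) → (∀ i, 0 ≤ v i ∧ v i ≤ 1) →
      (∀ i, v i * |o i * (K.mulVec u i - b i)| = 0) →
      (∑ i, (1 - vstar i)) +
        lam * ∑ i, (|Dx.mulVec ustar i| ^ p + |Dy.mulVec ustar i| ^ p) ^ (1/p) ≤
      (∑ i, (1 - v i)) +
        lam * ∑ i, (|Dx.mulVec u i| ^ p + |Dy.mulVec u i| ^ p) ^ (1/p)) := by
  intro vstar
  have hcost_star : ∑ i, (1 - vstar i) = (l0 (fun i => o i * (K.mulVec ustar i - b i)) : ℝ) := by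
    simp only [vstar, sub_sub_cancel, l0_eq_sum_sign_abs]
  refine ⟨fun i => Real.one_sub_sign_abs_mem_Icc _, fun i => Real.one_sub_sign_abs_mul_abs _,
    fun u v hu hv hvw => ?_⟩
  rw [hcost_star]
  refine (hmin u hu).trans (add_le_add_left ?_ _)
  exact l0_le_sum_one_sub_of_mul_abs_eq_zero (fun i => (hv i).2) hvw

/-- If `u*` globally minimizes `F(u) = ‖o ⊙ (Ku - b)‖₀ + λ‖∇u‖_{p,1}` over `[0,1]ⁿ`,
then `(u*, 1 - sign(|o ⊙ (Ku* - b)|))` globally minimizes the MPEC objective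
`G(u,v) = ⟨1, 1 - v⟩ + λ‖∇u‖_{p,1}` over its feasible set. -/
theorem l0tv_mpec_forward (n : ℕ) (K Dx Dy : Matrix (Fin n) (Fin n) ℝ)
    (b o : Fin n → ℝ) (ho : ∀ i, o i = 0 ∨ o i = 1)
    (lam p : ℝ) (hlam : 0 < lam) (hp : 1 ≤ p)
    (ustar : Fin n → ℝ) (hu : ∀ i, 0 ≤ ustar i ∧ ustar i ≤ 1)
    (hmin : ∀ u : Fin n → ℝ, (∀ i, 0 ≤ u i ∧ u i ≤ 1) →
      (l0 (fun i => o i * (K.mulVec ustar i - b i)) : ℝ) +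
        lam * ∑ i, (|Dx.mulVec ustar i| ^ p + |Dy.mulVec ustar i| ^ p) ^ (1/p) ≤
      (l0 (fun i => o i * (K.mulVec u i - b i)) : ℝ) +
        lam * ∑ i, (|Dx.mulVec u i| ^ p + |Dy.mulVec u i| ^ p) ^ (1/p)) :
    let vstar : Fin n → ℝ := fun i => 1 - Real.sign |o i * (K.mulVec ustar i - b i)|
    (∀ i, 0 ≤ vstar i ∧ vstar i ≤ 1) ∧
    (∀ i, vstar i * |o i * (K.mulVec ustar i - b i)| = 0) ∧
    (∀ u v : Fin n → ℝ, (∀ i, 0 ≤ u i ∧ u i ≤ 1) → (∀ i, 0 ≤ v i ∧ v i ≤ 1) →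
      (∀ i, v i * |o i * (K.mulVec u i - b i)| = 0) →
      (∑ i, (1 - vstar i)) +
        lam * ∑ i, (|Dx.mulVec ustar i| ^ p + |Dy.mulVec ustar i| ^ p) ^ (1/p) ≤
      (∑ i, (1 - v i)) +
        lam * ∑ i, (|Dx.mulVec u i| ^ p + |Dy.mulVec u i| ^ p) ^ (1/p)) :=
  l0tv_mpec_forward_general n K Dx Dy b o lam p ustar hmin
end

section
/- Conversely, if (u*, v*) is a global minimizer of G(u,v) = ⟨1, 1 - v⟩ + λ‖∇u‖_{p,1} over {(u,v) : 0 ≤ u,v ≤ 1, v ⊙ |o ⊙ (Ku - b)| = 0}, then u* is a global minimizer of F(u) = ‖o ⊙ (Ku - b)‖₀ + λ‖∇u‖_{p,1} over [0,1]ⁿ, and the optimal values of F and G coincide. -/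
open Finset

/-- If `(u*, v*)` globally minimizes the MPEC objective
`G(u,v) = ⟨1, 1 - v⟩ + λ‖∇u‖_{p,1}` over its feasible set, then `u*` globally
minimizes `F(u) = ‖o ⊙ (Ku - b)‖₀ + λ‖∇u‖_{p,1}` over `[0,1]ⁿ`, and the optimal
values coincide: `F(u*) = G(u*, v*)`. -/
theorem l0tv_mpec_backward (n : ℕ) (K Dx Dy : Matrix (Fin n) (Fin n) ℝ)
    (b o : Fin n → ℝ) (ho : ∀ i, o i = 0 ∨ o i = 1)
    (lam p : ℝ) (hlam : 0 < lam) (hp : 1 ≤ p)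
    (ustar vstar : Fin n → ℝ)
    (hu : ∀ i, 0 ≤ ustar i ∧ ustar i ≤ 1)
    (hv : ∀ i, 0 ≤ vstar i ∧ vstar i ≤ 1)
    (hcomp : ∀ i, vstar i * |o i * (K.mulVec ustar i - b i)| = 0)
    (hmin : ∀ u v : Fin n → ℝ, (∀ i, 0 ≤ u i ∧ u i ≤ 1) → (∀ i, 0 ≤ v i ∧ v i ≤ 1) →
      (∀ i, v i * |o i * (K.mulVec u i - b i)| = 0) →
      (∑ i, (1 - vstar i)) +
        lam * ∑ i, (|Dx.mulVec ustar i| ^ p + |Dy.mulVec ustar i| ^ p) ^ (1/p) ≤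
      (∑ i, (1 - v i)) +
        lam * ∑ i, (|Dx.mulVec u i| ^ p + |Dy.mulVec u i| ^ p) ^ (1/p)) :
    (∀ u : Fin n → ℝ, (∀ i, 0 ≤ u i ∧ u i ≤ 1) →
      (l0 (fun i => o i * (K.mulVec ustar i - b i)) : ℝ) +
        lam * ∑ i, (|Dx.mulVec ustar i| ^ p + |Dy.mulVec ustar i| ^ p) ^ (1/p) ≤
      (l0 (fun i => o i * (K.mulVec u i - b i)) : ℝ) +
        lam * ∑ i, (|Dx.mulVec u i| ^ p + |Dy.mulVec u i| ^ p) ^ (1/p)) ∧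
    ((l0 (fun i => o i * (K.mulVec ustar i - b i)) : ℝ) +
        lam * ∑ i, (|Dx.mulVec ustar i| ^ p + |Dy.mulVec ustar i| ^ p) ^ (1/p) =
      (∑ i, (1 - vstar i)) +
        lam * ∑ i, (|Dx.mulVec ustar i| ^ p + |Dy.mulVec ustar i| ^ p) ^ (1/p)) := by

  classical
  set w : (Fin n → ℝ) → Fin n → ℝ := fun u i => o i * (K.mulVec u i - b i) with hw
  set TV : (Fin n → ℝ) → ℝ :=
    fun u => lam * ∑ i, (|Dx.mulVec u i| ^ p + |Dy.mulVec u i| ^ p) ^ (1/p) with hTV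
  -- sum of indicator equals l0
  have hsum : ∀ u : Fin n → ℝ,
      (∑ i, (1 - (if w u i = 0 then (1:ℝ) else 0))) = (l0 (w u) : ℝ) := by
    intro u
    have : ∀ i, (1 - (if w u i = 0 then (1:ℝ) else 0)) =
        (if w u i ≠ 0 then (1:ℝ) else 0) := by
      intro i; by_cases h : w u i = 0 <;> simp [h]
    rw [Finset.sum_congr rfl (fun i _ => this i)]
    simp only [ne_eq]
    rw [Finset.sum_boole]
    simp [l0]
  -- G(u*,v*) ≤ l0(u) + TV(u) for any feasible u
  have hA : ∀ u : Fin n → ℝ, (∀ i, 0 ≤ u i ∧ u i ≤ 1) →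
      (∑ i, (1 - vstar i)) + TV ustar ≤ (l0 (w u) : ℝ) + TV u := by
    intro u hub
    have := hmin u (fun i => if w u i = 0 then (1:ℝ) else 0) hub
      (by intro i; by_cases h : w u i = 0 <;> simp [h])
      (by intro i; by_cases h : w u i = 0 <;> simp [h, hw])
    rw [hsum u] at this
    exact this
  -- l0(u*) ≤ Σ (1 - v*)
  have hB : (l0 (w ustar) : ℝ) ≤ ∑ i, (1 - vstar i) := by
    rw [← hsum ustar]
    apply Finset.sum_le_sum
    intro i _
    by_cases h : w ustar i = 0
    · simp [h]; linarith [(hv i).2]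
    · simp [h]
      have habs : |w ustar i| ≠ 0 := fun hc => h (abs_eq_zero.mp hc)
      have := hcomp i
      have hv0 : vstar i = 0 := by
        rcases mul_eq_zero.mp this with h1 | h1
        · exact h1
        · exact absurd h1 habs
      simp [hv0]
  have hEq : (l0 (w ustar) : ℝ) + TV ustar = (∑ i, (1 - vstar i)) + TV ustar := by
    have h1 := hA ustar hu
    linarith
  constructor
  · intro u hub
    have h1 := hA u hub
    calc (l0 (w ustar) : ℝ) + TV ustar = (∑ i, (1 - vstar i)) + TV ustar := hEq
      _ ≤ (l0 (w u) : ℝ) + TV u := h1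
  · exact hEq
end

section
/- For scalars q ∈ ℝ, w ≥ 0, π ≥ 0, β > 0, the function y ↦ (β/2)(y - q)² + (β/2)(w|y| + π/β)² attains its minimum over ℝ at y* = sign(q) · max(0, (|q| - πw/β)/(1 + w²)). -/
lemma key_scalar (A b d : ℝ) (hA : 0 < A) (hd : 0 ≤ d) (y : ℝ) :
    A * (Real.sign b * max 0 ((|b| - d) / A))^2
      - 2*b*(Real.sign b * max 0 ((|b| - d) / A))
      + 2*d*|Real.sign b * max 0 ((|b| - d) / A)| ≤
    A * y^2 - 2*b*y + 2*d*|y| := by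
  set t := max 0 ((|b| - d) / A) with htdef
  have ht : 0 ≤ t := le_max_left _ _
  have h1 : |b| - d ≤ t * A := (div_le_iff₀ hA).mp (le_max_right _ _)
  have h2 : t = 0 ∨ A * t = |b| - d := by
    rcases le_or_gt ((|b| - d)/A) 0 with h | h
    · left; simp [htdef, max_eq_left h]
    · right
      rw [htdef, max_eq_right h.le]
      field_simp
  have hby : b * y ≤ |b| * |y| := (le_abs_self _).trans (abs_mul b y).le
  have hy : 0 ≤ |y| := abs_nonneg y
  have hysq : |y|^2 = y^2 := sq_abs y
  rcases lt_trichotomy b 0 with hb | hb | hb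
  · rw [Real.sign_of_neg hb]
    have habs : |(-1 : ℝ) * t| = t := by rw [abs_mul]; simp [abs_of_nonneg ht]
    rw [habs]
    have hbb : |b| = -b := abs_of_neg hb
    rcases h2 with h2 | h2 <;> nlinarith [sq_nonneg (|y| - t), sq_nonneg (|y| + t)]
  · subst hb
    simp only [Real.sign_zero, zero_mul, abs_zero]
    nlinarith [sq_nonneg y]
  · rw [Real.sign_of_pos hb]
    have habs : |(1 : ℝ) * t| = t := by rw [abs_mul]; simp [abs_of_nonneg ht]
    rw [habs]
    have hbb : |b| = b := abs_of_pos hb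
    rcases h2 with h2 | h2 <;> nlinarith [sq_nonneg (|y| - t), sq_nonneg (|y| + t)]

/-- The scalar `y`-subproblem: for `q ∈ ℝ`, `w ≥ 0`, `π ≥ 0`, `β > 0`, the function
`y ↦ (β/2)(y - q)² + (β/2)(w|y| + π/β)²` attains its minimum over `ℝ` at
`y* = sign(q) · max(0, (|q| - πw/β)/(1 + w²))`. -/
theorem scalar_y_subproblem (q w pa β : ℝ) (hw : 0 ≤ w) (hpa : 0 ≤ pa) (hβ : 0 < β) :
    let ystar : ℝ := Real.sign q * max 0 ((|q| - pa * w / β) / (1 + w^2))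
    ∀ y : ℝ,
      (β/2) * (ystar - q)^2 + (β/2) * (w * |ystar| + pa / β)^2 ≤
      (β/2) * (y - q)^2 + (β/2) * (w * |y| + pa / β)^2 := by
  intro ystar y
  have hA : (0:ℝ) < 1 + w^2 := by positivity
  have hd : 0 ≤ w * (pa / β) := by positivity
  have hrw : pa * w / β = w * (pa / β) := by ring
  have hys : ystar = Real.sign q * max 0 ((|q| - w * (pa/β)) / (1 + w^2)) := by
    simp only [ystar, hrw]
  have hkey := key_scalar (1 + w^2) q (w * (pa/β)) hA hd y
  rw [← hys] at hkey
  have hE : ∀ z : ℝ, (β/2) * (z - q)^2 + (β/2) * (w * |z| + pa / β)^2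
      = (β/2) * ((1 + w^2) * z^2 - 2*q*z + 2*(w*(pa/β))*|z| + q^2 + (pa/β)^2) := by
    intro z
    rw [show (1 + w^2) * z^2 = z^2 + w^2 * |z|^2 by rw [sq_abs]; ring]
    ring
  rw [hE ystar, hE y]
  have hb2 : (0:ℝ) < β/2 := by linarith
  nlinarith [hkey]
end
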